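/- Let f_1, …, f_K : X → ℝ be score functions on an input space X, and let (x_1, y_1), …, (x_N, y_N) ∈ X × {1, …, K} be data points. Then the softmax log-likelihood is bounded below by the one-vs-each objective: ∑_{n=1}^N log(e^{f_{y_n}(x_n)} / ∑_{m=1}^K e^{f_m(x_n)}) ≥ -∑_{n=1}^N ∑_{m ≠ y_n} log(1 + e^{-(f_{y_n}(x_n) - f_m(x_n))}). -/
import Mathlib

open Finset Real

lemma one_add_sum_le_prod_one_add' {ι : Type*} [DecidableEq ι] (s : Finset ι) (t : ι → ℝ)
    (ht : ∀ i ∈ s, 0 ≤ t i) :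
    1 + ∑ i ∈ s, t i ≤ ∏ i ∈ s, (1 + t i) := by
  induction s using Finset.induction_on with
  | empty => simp
  | @insert a s hx ih =>
    rw [Finset.sum_insert hx, Finset.prod_insert hx]
    have h1 : 0 ≤ t a := ht a (Finset.mem_insert_self a s)
    have h2 : ∀ i ∈ s, 0 ≤ t i := fun i hi => ht i (Finset.mem_insert_of_mem hi)
    have h3 := ih h2
    have hs : 0 ≤ ∑ i ∈ s, t i := Finset.sum_nonneg h2
    nlinarith [Finset.sum_nonneg h2]

/-- The softmax log-likelihood of a dataset is bounded below by the
one-vs-each objective: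
`∑ n, log (e^{f_{y n} (x n)} / ∑ m, e^{f m (x n)}) ≥
  -∑ n, ∑_{m ≠ y n} log (1 + e^{-(f_{y n} (x n) - f m (x n))})`. -/
theorem softmax_loglik_ge_one_vs_each {X : Type*} {K N : ℕ}
    (f : Fin K → X → ℝ) (x : Fin N → X) (y : Fin N → Fin K) :
    ∑ n, Real.log (Real.exp (f (y n) (x n)) / ∑ m, Real.exp (f m (x n))) ≥
      -∑ n, ∑ m ∈ Finset.univ.erase (y n),
        Real.log (1 + Real.exp (-(f (y n) (x n) - f m (x n)))) := by
  rw [ge_iff_le, neg_le, ← Finset.sum_neg_distrib]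
  apply Finset.sum_le_sum
  intro n _
  set a : Fin K → ℝ := fun m => f m (x n) with ha
  have hy : a (y n) = f (y n) (x n) := rfl
  -- rewrite log term
  have hS : (0:ℝ) < ∑ m, Real.exp (a m) :=
    Finset.sum_pos (fun m _ => Real.exp_pos _) ⟨y n, Finset.mem_univ _⟩
  rw [Real.log_div (Real.exp_ne_zero _) (ne_of_gt hS), neg_sub]
  -- goal: log S - log(exp a_y) ≤ ∑ log(1+exp(a_m - a_y))
  have key : (∑ m, Real.exp (a m)) ≤
      Real.exp (a (y n)) * ∏ m ∈ Finset.univ.erase (y n),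
        (1 + Real.exp (-(a (y n) - a m))) := by
    have h1 : (∑ m, Real.exp (a m)) =
        Real.exp (a (y n)) * (1 + ∑ m ∈ Finset.univ.erase (y n),
          Real.exp (-(a (y n) - a m))) := by
      rw [← Finset.add_sum_erase _ _ (Finset.mem_univ (y n))]
      rw [mul_add, mul_one, Finset.mul_sum]
      congr 1
      apply Finset.sum_congr rfl
      intro m _
      rw [← Real.exp_add]
      ring_nf
    rw [h1]
    apply mul_le_mul_of_nonneg_left _ (Real.exp_pos _).le
    exact one_add_sum_le_prod_one_add' _ _ (fun i _ => (Real.exp_pos _).le)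
  calc Real.log (∑ m, Real.exp (a m)) - Real.log (Real.exp (a (y n)))
      ≤ Real.log (Real.exp (a (y n)) * ∏ m ∈ Finset.univ.erase (y n),
          (1 + Real.exp (-(a (y n) - a m)))) - Real.log (Real.exp (a (y n))) := by
        exact sub_le_sub_right (Real.log_le_log hS key) _
    _ = ∑ m ∈ Finset.univ.erase (y n),
          Real.log (1 + Real.exp (-(a (y n) - a m))) := by
        rw [Real.log_mul (Real.exp_ne_zero _), add_sub_cancel_left]
        · rw [Real.log_prod]
          intro m _
          positivity
        · apply ne_of_gt
          apply Finset.prod_pos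
          intro m _
          positivity
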